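/- For every twice continuously differentiable vector field u : ℝ³ → ℝ³, the identity ∇(axl(skew ∇u)) = (Curl(sym ∇u))ᵀ holds at every point, where ∇u is the Jacobian matrix of u, ∇(axl(skew ∇u)) is the Jacobian of the vector field axl(skew ∇u), and Curl(sym ∇u) is the row-wise Curl of the symmetric part of ∇u. -/

import Mathlib

open Matrix

/-- Partial derivative in direction `j` of a scalar field on `ℝ³`. -/
noncomputable def pd (j : Fin 3) (f : (Fin 3 → ℝ) → ℝ) (x : Fin 3 → ℝ) : ℝ :=
  fderiv ℝ f x (Pi.single j 1)

/-- Gradient of a scalar field on `ℝ³`. -/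
noncomputable def grad3 (f : (Fin 3 → ℝ) → ℝ) (x : Fin 3 → ℝ) : Fin 3 → ℝ :=
  fun i => pd i f x

/-- Classical curl of a vector field on `ℝ³`. -/
noncomputable def vcurl (v : (Fin 3 → ℝ) → Fin 3 → ℝ) (x : Fin 3 → ℝ) : Fin 3 → ℝ :=
  ![pd 1 (fun y => v y 2) x - pd 2 (fun y => v y 1) x,
    pd 2 (fun y => v y 0) x - pd 0 (fun y => v y 2) x,
    pd 0 (fun y => v y 1) x - pd 1 (fun y => v y 0) x]

/-- Divergence of a vector field on `ℝ³`. -/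
noncomputable def vdiv (v : (Fin 3 → ℝ) → Fin 3 → ℝ) (x : Fin 3 → ℝ) : ℝ :=
  ∑ i, pd i (fun y => v y i) x

/-- Row-wise Curl of a matrix field on `ℝ³`: the `i`-th row of `mCurl P`
is the curl of the `i`-th row of `P`. -/
noncomputable def mCurl (P : (Fin 3 → ℝ) → Matrix (Fin 3) (Fin 3) ℝ) (x : Fin 3 → ℝ) :
    Matrix (Fin 3) (Fin 3) ℝ :=
  Matrix.of fun i j => vcurl (fun y => P y i) x j

/-- Jacobian matrix of a vector field on `ℝ³`. -/
noncomputable def jac (v : (Fin 3 → ℝ) → Fin 3 → ℝ) (x : Fin 3 → ℝ) :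
    Matrix (Fin 3) (Fin 3) ℝ :=
  Matrix.of fun i j => pd j (fun y => v y i) x

/-- Axial vector of a (skew-symmetric) `3 × 3` matrix: with `A 1 2 = -a₁`,
`A 2 0 = -a₂`, `A 0 1 = -a₃` (so `A 2 1 = a₁`, `A 0 2 = a₂`, `A 1 0 = a₃`). -/
def axl (A : Matrix (Fin 3) (Fin 3) ℝ) : Fin 3 → ℝ :=
  ![A 2 1, A 0 2, A 1 0]

/-- The skew-symmetric matrix `anti a` characterized by `(anti a) ⬝ v = a × v`. -/
def antiM (a : Fin 3 → ℝ) : Matrix (Fin 3) (Fin 3) ℝ :=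
  !![0, -a 2, a 1; a 2, 0, -a 0; -a 1, a 0, 0]

/-- Symmetric part of a matrix. -/
noncomputable def symM (X : Matrix (Fin 3) (Fin 3) ℝ) : Matrix (Fin 3) (Fin 3) ℝ :=
  (1 / 2 : ℝ) • (X + Xᵀ)

/-- Skew-symmetric part of a matrix. -/
noncomputable def skewM (X : Matrix (Fin 3) (Fin 3) ℝ) : Matrix (Fin 3) (Fin 3) ℝ :=
  (1 / 2 : ℝ) • (X - Xᵀ)

/-- Deviatoric (trace-free) part of a matrix. -/
noncomputable def devM (X : Matrix (Fin 3) (Fin 3) ℝ) : Matrix (Fin 3) (Fin 3) ℝ :=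
  X - (Matrix.trace X / 3) • (1 : Matrix (Fin 3) (Fin 3) ℝ)

/-- Frobenius inner product `⟨X, Y⟩ = tr (X Yᵀ)`. -/
noncomputable def minner (X Y : Matrix (Fin 3) (Fin 3) ℝ) : ℝ :=
  Matrix.trace (X * Yᵀ)

/-- Squared Frobenius norm. -/
noncomputable def mnormSq (X : Matrix (Fin 3) (Fin 3) ℝ) : ℝ :=
  minner X X

/-- Squared Euclidean norm of a vector in `ℝ³`. -/
def vnormSq (v : Fin 3 → ℝ) : ℝ :=
  ∑ i, (v i) ^ 2

/-! Both sides consist of second partial derivatives of `u`. Writing `(a, b) = (i + 1, i + 2)`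
cyclically, entry `(i, j)` of the left side is `∂ⱼ ½(∂ₐu_b - ∂_b uₐ)` and that of the right side is
`∂ₐ ½(∂_b uⱼ + ∂ⱼu_b) - ∂_b ½(∂ₐuⱼ + ∂ⱼuₐ)`; they agree because mixed partials of a `C²`
function commute. -/

theorem ContDiffAt.fderiv_fderiv_apply_comm {E F : Type*} [NormedAddCommGroup E]
    [NormedSpace ℝ E] [NormedAddCommGroup F] [NormedSpace ℝ F] {f : E → F} {x : E}
    (hf : ContDiffAt ℝ 2 f x) (v w : E) :
    fderiv ℝ (fun y => fderiv ℝ f y v) x w = fderiv ℝ (fun y => fderiv ℝ f y w) x v := by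
  have hdf : DifferentiableAt ℝ (fderiv ℝ f) x :=
    (hf.fderiv_right (m := 1) le_rfl).differentiableAt one_ne_zero
  simpa [fderiv_clm_apply hdf (differentiableAt_const _)] using
    (hf.isSymmSndFDerivAt (by simp)).eq w v

section PartialDerivatives

variable {f g : (Fin 3 → ℝ) → ℝ} {x : Fin 3 → ℝ}

theorem pd_add (hf : DifferentiableAt ℝ f x) (hg : DifferentiableAt ℝ g x) (j : Fin 3) :
    pd j (fun y => f y + g y) x = pd j f x + pd j g x := by
  simp [pd, fderiv_fun_add hf hg]

theorem pd_sub (hf : DifferentiableAt ℝ f x) (hg : DifferentiableAt ℝ g x) (j : Fin 3) :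
    pd j (fun y => f y - g y) x = pd j f x - pd j g x := by
  simp [pd, fderiv_fun_sub hf hg]

theorem pd_const_mul (hf : DifferentiableAt ℝ f x) (c : ℝ) (j : Fin 3) :
    pd j (fun y => c * f y) x = c * pd j f x := by
  simp [pd, fderiv_const_mul hf]

theorem ContDiffAt.differentiableAt_pd (hf : ContDiffAt ℝ 2 f x) (k : Fin 3) :
    DifferentiableAt ℝ (pd k f) x :=
  ((hf.fderiv_right (m := 1) le_rfl).differentiableAt one_ne_zero).clm_apply
    (differentiableAt_const _)

theorem ContDiffAt.pd_pd_comm (hf : ContDiffAt ℝ 2 f x) (j k : Fin 3) :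
    pd j (pd k f) x = pd k (pd j f) x :=
  hf.fderiv_fderiv_apply_comm _ _

end PartialDerivatives

theorem axl_apply (A : Matrix (Fin 3) (Fin 3) ℝ) (i : Fin 3) : axl A i = A (i + 2) (i + 1) := by
  fin_cases i <;> rfl

theorem vcurl_apply (v : (Fin 3 → ℝ) → Fin 3 → ℝ) (x : Fin 3 → ℝ) (i : Fin 3) :
    vcurl v x i = pd (i + 1) (fun y => v y (i + 2)) x - pd (i + 2) (fun y => v y (i + 1)) x := by
  fin_cases i <;> rfl

theorem pd_skew_eq_pd_sym_sub_pd_sym {u : Fin 3 → (Fin 3 → ℝ) → ℝ} {x : Fin 3 → ℝ}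
    (hu : ∀ k, ContDiffAt ℝ 2 (u k) x) (a b j : Fin 3) :
    pd j (fun y => 1 / 2 * (pd a (u b) y - pd b (u a) y)) x =
      pd a (fun y => 1 / 2 * (pd b (u j) y + pd j (u b) y)) x -
        pd b (fun y => 1 / 2 * (pd a (u j) y + pd j (u a) y)) x := by
  have hd (k l : Fin 3) := (hu l).differentiableAt_pd k
  rw [pd_const_mul ((hd a b).fun_sub (hd b a)), pd_sub (hd a b) (hd b a),
    pd_const_mul ((hd b j).fun_add (hd j b)), pd_add (hd b j) (hd j b),
    pd_const_mul ((hd a j).fun_add (hd j a)), pd_add (hd a j) (hd j a),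
    (hu j).pd_pd_comm a b, (hu b).pd_pd_comm a j, (hu a).pd_pd_comm b j]
  ring

/-- ∇(axl(skew ∇u)) = (Curl(sym ∇u))ᵀ for every twice continuously
differentiable vector field u. -/
theorem grad_axl_skew_grad_eq
    (u : (Fin 3 → ℝ) → Fin 3 → ℝ) (hu : ContDiff ℝ 2 u) :
    ∀ x : Fin 3 → ℝ,
      jac (fun y => axl (skewM (jac u y))) x =
        (mCurl (fun y => symM (jac u y)) x)ᵀ := by
  intro x
  ext i j
  simp only [jac, mCurl, skewM, symM, axl_apply, vcurl_apply, of_apply, transpose_apply,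
    Matrix.smul_apply, Matrix.add_apply, Matrix.sub_apply, smul_eq_mul]
  exact pd_skew_eq_pd_sym_sub_pd_sym (fun k => (contDiff_pi.1 hu k).contDiffAt) (i + 1) (i + 2) j
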